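/- arXiv:2405.21007 — 4 statements merged into one kernel-verified Lean document; each statement's English description precedes it below -/
import Mathlib

section
/- For natural numbers N, K, M, E with E = K - 1, K ≥ 1, and N ≥ K: if C(N, K) ≤ M · C(N, K-1), then N ≤ K·M + E. -/
theorem Nat.sub_le_succ_mul_of_choose_succ_le {n k M : ℕ}
    (h : n.choose (k + 1) ≤ M * n.choose k) : n - k ≤ (k + 1) * M := by
  rcases lt_or_ge n k with hnk | hkn
  · omega
  · refine Nat.le_of_mul_le_mul_left ?_ (Nat.choose_pos hkn)
    calc n.choose k * (n - k) = n.choose (k + 1) * (k + 1) := (Nat.choose_succ_right_eq n k).symm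
      _ ≤ M * n.choose k * (k + 1) := Nat.mul_le_mul_right _ h
      _ = n.choose k * ((k + 1) * M) := by ring

theorem stmt_1_general (N K M E : ℕ) (hE : E = K - 1) (hK : 1 ≤ K)
    (h : N.choose K ≤ M * N.choose (K - 1)) : N ≤ K * M + E := by
  obtain ⟨k, rfl⟩ : ∃ k, K = k + 1 := ⟨K - 1, by omega⟩
  rw [Nat.add_sub_cancel] at hE h
  have := Nat.sub_le_succ_mul_of_choose_succ_le h
  omega

theorem stmt_1 (N K M E : ℕ) (hE : E = K - 1) (hK : 1 ≤ K) (hN : K ≤ N)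
    (h : N.choose K ≤ M * N.choose (K - 1)) : N ≤ K * M + E :=
  stmt_1_general N K M E hE hK h
end

section
/- For every natural number n, the identity ∑_{i=0}^{n} C(n, i)² · (n - i)! = n! · ∑_{i=0}^{n} C(n, i) / i! holds, where the right side is interpreted as ∑_{i=0}^{n} (n!/i!) · C(n, i). -/
open Nat

theorem Nat.factorial_div_factorial_eq_choose_mul {n i : ℕ} (h : i ≤ n) :
    n ! / i ! = n.choose i * (n - i)! :=
  Nat.div_eq_of_eq_mul_left i.factorial_pos <| by
    rw [← Nat.choose_mul_factorial_mul_factorial h, mul_right_comm]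

theorem stmt_2 (n : ℕ) :
    ∑ i ∈ Finset.range (n + 1), (n.choose i) ^ 2 * (n - i).factorial =
      ∑ i ∈ Finset.range (n + 1), (n.factorial / i.factorial) * n.choose i := by
  refine Finset.sum_congr rfl fun i hi => ?_
  rw [Nat.factorial_div_factorial_eq_choose_mul (Finset.mem_range_succ_iff.mp hi)]
  ring
end

section
/- For natural numbers D and K = 4, the inequality C(D,4) + D·C(D-1,2) + C(D,2) ≤ 6·C(D,3) + 3·D·(D-1) holds if and only if D ≤ 18 (for D ≥ 4). -/
/-!
Using `n * C(n - 1, k) = (k + 1) * C(n, k + 1)`, both sides become combinations of `C(D, 4)`,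
`C(D, 3)` and `C(D, 2)`, and clearing the factor `24` the difference of the two sides is
`D (D - 1) (30 + 17 D - D²) / 24`. For `D ≥ 2` its sign is that of
`30 + 17 D - D² = 12 - (D - 18)(D + 1)`, which is nonnegative exactly up to `D = 18`.
-/

open Nat

theorem Nat.mul_choose_sub_one (n k : ℕ) : n * (n - 1).choose k = n.choose (k + 1) * (k + 1) := by
  cases n with
  | zero => simp
  | succ n => exact add_one_mul_choose_eq n k

theorem Nat.cast_choose_two_rat (n : ℕ) : (n.choose 2 : ℚ) = n * (n - 1) / 2 := by
  rw [cast_choose_eq_descPochhammer_div]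
  simp [descPochhammer_succ_eval, factorial]

theorem Nat.cast_choose_three_rat (n : ℕ) : (n.choose 3 : ℚ) = n * (n - 1) * (n - 2) / 6 := by
  rw [cast_choose_eq_descPochhammer_div]
  simp [descPochhammer_succ_eval, factorial]

theorem Nat.cast_choose_four_rat (n : ℕ) :
    (n.choose 4 : ℚ) = n * (n - 1) * (n - 2) * (n - 3) / 24 := by
  rw [cast_choose_eq_descPochhammer_div]
  simp [descPochhammer_succ_eval, factorial]

theorem choose_four_le_iff (D : ℕ) :
    D.choose 4 ≤ 3 * D.choose 3 + 5 * D.choose 2 ↔ 0 ≤ (D : ℚ) * (D - 1) * (30 + 17 * D - D ^ 2) := by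
  have gap : (3 * D.choose 3 + 5 * D.choose 2 - D.choose 4 : ℚ) =
      (D : ℚ) * (D - 1) * (30 + 17 * D - D ^ 2) / 24 := by
    rw [cast_choose_two_rat, cast_choose_three_rat, cast_choose_four_rat]
    ring
  rw [← Nat.cast_le (α := ℚ), ← sub_nonneg]
  push_cast
  rw [gap]
  constructor <;> intro h <;> linarith

theorem quartic_nonneg_iff (n : ℕ) : 0 ≤ (n : ℚ) * (n - 1) * (30 + 17 * n - n ^ 2) ↔ n ≤ 18 := by
  rcases Nat.lt_or_ge n 2 with hn | hn
  · interval_cases n <;> norm_num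
  have hpos : 0 < (n : ℚ) * (n - 1) := by
    have : (2 : ℚ) ≤ n := by exact_mod_cast hn
    nlinarith
  rw [mul_nonneg_iff_of_pos_left hpos]
  constructor
  · intro h
    by_contra! hlt
    have : (19 : ℚ) ≤ n := by exact_mod_cast hlt
    nlinarith
  · intro h
    have : (n : ℚ) ≤ 18 := by exact_mod_cast h
    nlinarith

theorem stmt_7_general (D : ℕ) :
    (D.choose 4 + D * (D - 1).choose 2 + D.choose 2 ≤ 6 * D.choose 3 + 3 * D * (D - 1)) ↔
      D ≤ 18 := by
  have hmiddle : D * (D - 1).choose 2 = 3 * D.choose 3 := by rw [mul_choose_sub_one, mul_comm]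
  have hlast : 3 * D * (D - 1) = 6 * D.choose 2 := by
    rw [mul_assoc, ← choose_one_right (D - 1), mul_choose_sub_one]
    ring
  rw [hmiddle, hlast, ← quartic_nonneg_iff, ← choose_four_le_iff]
  omega

theorem stmt_7 (D : ℕ) (hD : 4 ≤ D) :
    (D.choose 4 + D * (D - 1).choose 2 + D.choose 2 ≤ 6 * D.choose 3 + 3 * D * (D - 1)) ↔
      D ≤ 18 :=
  stmt_7_general D
end

section
/- For natural numbers D and K with K = 3: the inequality ∑_{i=0}^{1} C(D,i)·C(D-i, 3-2i) ≤ ∑_{i=0}^{1} C(D,i)·C(D-i, 2-2i)·(2!/2^i) holds if and only if D ≤ 4 (for D ≥ 3). -/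
theorem stmt_19 (D : ℕ) (hD : 3 ≤ D) :
    (∑ i ∈ Finset.range 2, D.choose i * (D - i).choose (3 - 2 * i) ≤
      ∑ i ∈ Finset.range 2, D.choose i * (D - i).choose (2 - 2 * i) *
        (Nat.factorial 2 / 2 ^ i)) ↔ D ≤ 4 := by
  simp only [Finset.sum_range_succ, Finset.sum_range_zero]
  norm_num [Nat.factorial]
  obtain ⟨d, rfl⟩ : ∃ d, D = d + 3 := ⟨D - 3, by omega⟩
  have h3 : (d + 3).descFactorial 3 = 6 * (d + 3).choose 3 :=
    Nat.descFactorial_eq_factorial_mul_choose _ _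
  have h2 : (d + 3).descFactorial 2 = 2 * (d + 3).choose 2 :=
    Nat.descFactorial_eq_factorial_mul_choose _ _
  simp [Nat.descFactorial] at h3 h2
  constructor
  · intro h
    by_contra hc
    have hd2 : 2 ≤ d := by omega
    have hs : d + 3 - 1 = d + 2 := by omega
    rw [hs] at h
    nlinarith [h3, h2, h, hd2]
  · intro h
    have hd1 : d ≤ 1 := by omega
    interval_cases d <;> decide
end
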